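/- Consider the random walk on PSL(2,ℤ) = ⟨a,b | a² = b³ = 1⟩ driven by the uniform measure on {ab, ba}, with hitting measure ν on the Gromov boundary. Denote by G_{g*} the shadow of geodesics from the identity beginning with g. Then ν(G_{a*}) = 1/2, ν(G_{BaB*}) = 2ν(G_{B*})² where B = b⁻¹, and consequently ν(G_{B*}) = (3 − √5)/4 and ν(G_{b*}) = (√5 − 1)/4. -/

import Mathlib

open MeasureTheory

/-- The alphabet for normal forms in `PSL(2,ℤ) = ⟨a, b | a² = b³ = 1⟩ = ℤ/2 * ℤ/3`:
`a`, `b` and `B = b⁻¹`. -/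
inductive Rad
  | a | b | B
deriving DecidableEq

instance : MeasurableSpace Rad := ⊤

/-- Adjacent letters in a reduced normal form: exactly one of them is `a`. -/
def radOk (x y : Rad) : Prop := (x = Rad.a) ↔ ¬(y = Rad.a)

/-- An infinite reduced normal form (a point of the Gromov boundary of `PSL(2,ℤ)`):
an infinite word alternating between `a` and `b^{±1}`. -/
def Reduced (x : ℕ → Rad) : Prop := ∀ n, radOk (x n) (x (n + 1))

/-- Left multiplication by one letter on infinite normal forms, with cancellation:
`a·(a x) = x`, `b·(b x) = B x`, `b·(B x) = x`, `B·(B x) = b x`, `B·(b x) = x`,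
and prepending in the remaining (already reduced) cases. -/
def consRed (r : Rad) (x : ℕ → Rad) : ℕ → Rad :=
  match r, x 0 with
  | .a, .a => fun n => x (n + 1)
  | .b, .b => Function.update x 0 Rad.B
  | .b, .B => fun n => x (n + 1)
  | .B, .B => Function.update x 0 Rad.b
  | .B, .b => fun n => x (n + 1)
  | r, _ => fun n => match n with | 0 => r | Nat.succ k => x k

/-- The (left) action of a group element, given as a word in `a, b, b⁻¹`, on
infinite normal forms. -/
def act (g : List Rad) (x : ℕ → Rad) : ℕ → Rad := g.foldr consRed x

/-- The shadow `G_{g*}`: boundary points whose normal form begins with the word `w`. -/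
def Shadow (w : List Rad) : Set (ℕ → Rad) := {x | ∀ i : Fin w.length, x i = w.get i}

namespace StatProof


noncomputable def xx : ℝ := (3 - Real.sqrt 5) / 4
noncomputable def yy : ℝ := (Real.sqrt 5 - 1) / 4

lemma sqrt5_sq : Real.sqrt 5 * Real.sqrt 5 = 5 := Real.mul_self_sqrt (by norm_num)
lemma sqrt5_lt : Real.sqrt 5 < 9/4 := by nlinarith [sqrt5_sq, Real.sqrt_nonneg 5]
lemma sqrt5_gt : 2 < Real.sqrt 5 := by nlinarith [sqrt5_sq, Real.sqrt_nonneg 5]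
lemma xx_pos : 0 < xx := by unfold xx; nlinarith [sqrt5_lt]
lemma yy_pos : 0 < yy := by unfold yy; nlinarith [sqrt5_gt]
lemma xx_lt_one : xx < 1 := by unfold xx; nlinarith [sqrt5_gt]
lemma sum_id : 2*xx + 2*yy = 1 := by unfold xx yy; ring
lemma id1 : 4*yy*(1-xx) = 1 := by
  unfold xx yy; linear_combination (1/4 : ℝ) * sqrt5_sq
lemma id2 : yy = 2*xx*(1-xx) := by
  unfold xx yy; linear_combination (1/8 : ℝ) * sqrt5_sq
lemma delta_pos : 0 < 1 - 3*xx := by unfold xx; nlinarith [sqrt5_gt]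
lemma one_sub_xx_pos : 0 < 1 - xx := by linarith [xx_lt_one]

/-! ### The abstract Markov-harmonicity part -/

abbrev St : Type := Bool × List Bool

noncomputable def T (f : St → ℝ) : St → ℝ := fun σ =>
  match σ with
  | (F, []) => 2*yy * f (F, [false]) + 2*xx * f (F, [true])
  | (F, false :: s) => (1-xx) * f (F, s) + xx * f (F, true :: false :: s)
  | (F, true :: s)  => (1-xx) * f (!F, false :: s) + xx * f (F, true :: true :: s)

lemma T_nil (f : St → ℝ) (F : Bool) :
    T f (F, []) = 2*yy * f (F, [false]) + 2*xx * f (F, [true]) := rfl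
lemma T_f (f : St → ℝ) (F : Bool) (s : List Bool) :
    T f (F, false :: s) = (1-xx) * f (F, s) + xx * f (F, true :: false :: s) := rfl
lemma T_t (f : St → ℝ) (F : Bool) (s : List Bool) :
    T f (F, true :: s) = (1-xx) * f (!F, false :: s) + xx * f (F, true :: true :: s) := rfl

lemma T_mono {f g : St → ℝ} (h : ∀ τ, f τ ≤ g τ) : ∀ σ, T f σ ≤ T g σ := by
  have hx := xx_pos; have hy := yy_pos; have h1x := one_sub_xx_pos
  rintro ⟨F, _ | ⟨c, s⟩⟩
  · exact add_le_add (mul_le_mul_of_nonneg_left (h _) (by linarith))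
      (mul_le_mul_of_nonneg_left (h _) (by linarith))
  · cases c <;>
    exact add_le_add (mul_le_mul_of_nonneg_left (h _) (by linarith))
      (mul_le_mul_of_nonneg_left (h _) (by linarith))

lemma T_one : ∀ σ, T (fun _ => (1:ℝ)) σ = 1 := by
  have := sum_id
  rintro ⟨F, _ | ⟨c, s⟩⟩
  · simp only [T_nil]; linarith
  · cases c <;> simp only [T_f, T_t] <;> ring

lemma T_affine (a b : ℝ) (f g : St → ℝ) :
    ∀ σ, T (fun τ => a * f τ + b * g τ) σ = a * T f σ + b * T g σ := by
  rintro ⟨F, _ | ⟨c, s⟩⟩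
  · simp only [T_nil]; ring
  · cases c <;> simp only [T_f, T_t] <;> ring

/-- masked function: zero on the empty-string states -/
def mask (f : St → ℝ) : St → ℝ := fun σ => if σ.2 = [] then 0 else f σ

noncomputable def Tk (f : St → ℝ) : St → ℝ := T (mask f)

lemma mask_mono {f g : St → ℝ} (h : ∀ τ, τ.2 ≠ [] → f τ ≤ g τ) :
    ∀ τ, mask f τ ≤ mask g τ := by
  intro τ; unfold mask; split
  · exact le_refl 0
  · exact h τ (by assumption)

lemma Tk_mono {f g : St → ℝ} (h : ∀ τ, τ.2 ≠ [] → f τ ≤ g τ) :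
    ∀ σ, Tk f σ ≤ Tk g σ := fun σ => T_mono (mask_mono h) σ

lemma mask_affine (a b : ℝ) (f g : St → ℝ) :
    mask (fun τ => a * f τ + b * g τ) = fun τ => a * mask f τ + b * mask g τ := by
  funext τ; unfold mask; split <;> ring

lemma Tk_affine (a b : ℝ) (f g : St → ℝ) :
    ∀ σ, Tk (fun τ => a * f τ + b * g τ) σ = a * Tk f σ + b * Tk g σ := by
  intro σ; unfold Tk; rw [mask_affine]; exact T_affine a b _ _ σ

lemma Tk_nonneg {f : St → ℝ} (h : ∀ τ, 0 ≤ f τ) : ∀ σ, 0 ≤ Tk f σ := by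
  intro σ
  have h0 : ∀ τ, (fun _ => (0:ℝ)) τ ≤ mask f τ := by
    intro τ; unfold mask; split; exacts [le_refl 0, h τ]
  have : T (fun _ => (0:ℝ)) σ ≤ T (mask f) σ := T_mono h0 σ
  have hz : T (fun _ => (0:ℝ)) σ = 0 := by
    have := T_affine 0 0 (fun _ => (1:ℝ)) (fun _ => (1:ℝ)) σ
    simpa using this
  unfold Tk; linarith

lemma Tk_le_one {f : St → ℝ} (h : ∀ τ, f τ ≤ 1) : ∀ σ, Tk f σ ≤ 1 := by
  intro σ
  have h0 : ∀ τ, mask f τ ≤ (fun _ => (1:ℝ)) τ := by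
    intro τ; unfold mask; split; exacts [by norm_num, h τ]
  have := T_mono h0 σ
  unfold Tk; rw [T_one σ] at this; exact this

/-- avoidance masses -/
noncomputable def Av : ℕ → St → ℝ
  | 0 => fun _ => 1
  | n+1 => Tk (Av n)

lemma Av_nonneg : ∀ n σ, 0 ≤ Av n σ := by
  intro n; induction n with
  | zero => intro σ; norm_num [Av]
  | succ n ih => intro σ; exact Tk_nonneg ih σ

lemma Av_le_one : ∀ n σ, Av n σ ≤ 1 := by
  intro n; induction n with
  | zero => intro σ; norm_num [Av]
  | succ n ih => intro σ; exact Tk_le_one ih σ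

lemma Av_anti : ∀ n σ, Av (n+1) σ ≤ Av n σ := by
  intro n; induction n with
  | zero => intro σ; exact Av_le_one 1 σ
  | succ n ih => intro σ; exact Tk_mono (fun τ _ => ih τ) σ

/-- Lyapunov function -/
def phl : List Bool → ℝ
  | [] => 0
  | c :: s => (if c then 2 else 1) + phl s

def phi : St → ℝ := fun σ => phl σ.2

lemma phl_nonneg : ∀ s, 0 ≤ phl s := by
  intro s; induction s with
  | nil => norm_num [phl]
  | cons c s ih => unfold phl; split <;> linarith

lemma mask_phi : mask phi = phi := by
  funext τ; unfold mask; split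
  · rename_i h
    obtain ⟨F, s⟩ := τ
    simp only at h; subst h; simp [phi, phl]
  · rfl

lemma Tk_phi {σ : St} (h : σ.2 ≠ []) : Tk phi σ = phi σ - (1 - 3*xx) := by
  unfold Tk; rw [mask_phi]
  obtain ⟨F, _ | ⟨c, s⟩⟩ := σ
  · exact absurd rfl h
  · cases c <;> simp only [T_f, T_t, phi, phl] <;> simp <;> ring

/-- potential sequence -/
noncomputable def Bv : ℕ → St → ℝ
  | 0 => phi
  | n+1 => Tk (Bv n)

lemma Bv_nonneg : ∀ n σ, 0 ≤ Bv n σ := by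
  intro n; induction n with
  | zero => intro σ; exact phl_nonneg σ.2
  | succ n ih => intro σ; exact Tk_nonneg ih σ

lemma Bv_step : ∀ n (σ : St), σ.2 ≠ [] →
    Bv (n+1) σ ≤ Bv n σ - (1 - 3*xx) * Av n σ := by
  intro n; induction n with
  | zero =>
    intro σ hσ
    have := Tk_phi hσ
    simp only [Bv, Av]
    rw [this]; ring_nf; exact le_refl _
  | succ n ih =>
    intro σ _
    have key : ∀ τ, τ.2 ≠ [] → Bv (n+1) τ ≤ (fun τ => 1 * Bv n τ + (-(1-3*xx)) * Av n τ) τ := by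
      intro τ hτ; have := ih τ hτ; simp only; linarith
    have h1 : Tk (Bv (n+1)) σ ≤ Tk (fun τ => 1 * Bv n τ + (-(1-3*xx)) * Av n τ) σ :=
      Tk_mono key σ
    have h2 := Tk_affine 1 (-(1-3*xx)) (Bv n) (Av n) σ
    show Tk (Bv (n+1)) σ ≤ Tk (Bv n) σ - (1-3*xx) * Tk (Av n) σ
    rw [h2] at h1; linarith

lemma Av_bound : ∀ (n : ℕ) (σ : St), σ.2 ≠ [] →
    (1 - 3*xx) * (n : ℝ) * Av n σ ≤ phi σ := by
  have hδ := delta_pos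
  have hsum : ∀ n (σ : St), σ.2 ≠ [] →
      (1-3*xx) * (∑ k ∈ Finset.range n, Av k σ) ≤ phi σ - Bv n σ := by
    intro n σ hσ; induction n with
    | zero => simp [Bv]
    | succ n ih =>
      rw [Finset.sum_range_succ]
      have := Bv_step n σ hσ
      have hb := Bv_nonneg (n+1) σ
      nlinarith
  intro n σ hσ
  have h1 := hsum n σ hσ
  have h2 : (n : ℝ) * Av n σ ≤ ∑ k ∈ Finset.range n, Av k σ := by
    have : ∀ k ∈ Finset.range n, Av n σ ≤ Av k σ := by
      intro k hk
      have hk' := Finset.mem_range.1 hk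
      have : ∀ m l, Av (m + l) σ ≤ Av m σ := by
        intro m l; induction l with
        | zero => exact le_refl _
        | succ l ih => calc Av (m + (l+1)) σ ≤ Av (m+l) σ := Av_anti _ σ
                            _ ≤ Av m σ := ih
      have hkn : k + (n - k) = n := by omega
      calc Av n σ = Av (k + (n-k)) σ := by rw [hkn]
        _ ≤ Av k σ := this k (n-k)
    calc (n:ℝ) * Av n σ = ∑ _k ∈ Finset.range n, Av n σ := by
          rw [Finset.sum_const, Finset.card_range]; ring
      _ ≤ ∑ k ∈ Finset.range n, Av k σ := Finset.sum_le_sum this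
  have hb := Bv_nonneg n σ
  nlinarith

section Harmonic

variable (v : St → ℝ) (hv : ∀ σ, T v σ = v σ) (h0 : ∀ σ, 0 ≤ v σ)

noncomputable def m0 : ℝ := min (v (true, [])) (v (false, []))

include h0 in
lemma m0_nonneg : 0 ≤ m0 v := le_min (h0 _) (h0 _)

lemma m0_le_nil : ∀ F, m0 v ≤ v (F, []) := by
  intro F; cases F
  · exact min_le_right _ _
  · exact min_le_left _ _

include hv h0 in
lemma lower_bound : ∀ n σ, m0 v * (1 - Av n σ) ≤ v σ := by
  have hm0 := m0_nonneg v h0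
  intro n; induction n with
  | zero => intro σ; simp [Av]; exact h0 σ
  | succ n ih =>
    intro σ
    by_cases hσ : σ.2 = []
    · obtain ⟨F, s⟩ := σ; simp only at hσ; subst hσ
      have h1 := m0_le_nil v F
      have h2 := Av_nonneg (n+1) (F, [])
      nlinarith
    · have hpt : ∀ τ, (fun τ => m0 v * 1 + (-(m0 v)) * mask (Av n) τ) τ ≤ v τ := by
        intro τ
        by_cases hτ : τ.2 = []
        · simp only [mask, hτ, if_pos]
          obtain ⟨F, s⟩ := τ; simp only at hτ; subst hτ
          have := m0_le_nil v F; simpa using this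
        · simp only [mask, if_neg hτ]
          have := ih τ; linarith
      have h1 : T (fun τ => m0 v * 1 + (-(m0 v)) * mask (Av n) τ) σ ≤ T v σ :=
        T_mono hpt σ
      have h2 := T_affine (m0 v) (-(m0 v)) (fun _ => (1:ℝ)) (mask (Av n)) σ
      have h3 : T (fun τ => m0 v * (fun _ => (1:ℝ)) τ + (-(m0 v)) * mask (Av n) τ) σ
          = m0 v * 1 + (-(m0 v)) * Tk (Av n) σ := by
        rw [h2, T_one σ]; rfl
      rw [hv σ] at h1
      have : m0 v * 1 + (-(m0 v)) * Tk (Av n) σ ≤ v σ := by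
        rw [← h3]; exact h1
      show m0 v * (1 - Av (n+1) σ) ≤ v σ
      simp only [Av]; linarith

include hv h0 in
lemma v_ge_m0 : ∀ σ, m0 v ≤ v σ := by
  have hm0 := m0_nonneg v h0
  have hδ := delta_pos
  intro σ
  by_cases hσ : σ.2 = []
  · obtain ⟨F, s⟩ := σ; simp only at hσ; subst hσ; exact m0_le_nil v F
  · by_contra hlt
    push_neg at hlt
    set c := m0 v - v σ with hc
    have hcpos : 0 < c := by simp only [hc]; linarith
    obtain ⟨n, hn⟩ := exists_nat_gt (m0 v * phi σ / ((1-3*xx) * c))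
    have hnn : (0:ℝ) ≤ n := Nat.cast_nonneg n
    have hAv := Av_bound n σ hσ
    have hlow := lower_bound v hv h0 n σ
    have h1 : c ≤ m0 v * Av n σ := by nlinarith
    have hn2 : m0 v * phi σ < ((1-3*xx) * c) * n := by
      rw [div_lt_iff₀ (by positivity)] at hn; linarith
    have hAnn := Av_nonneg n σ
    nlinarith [mul_le_mul_of_nonneg_left h1 (mul_nonneg (le_of_lt hδ) hnn)]

lemma pin {c1 c2 a b m : ℝ} (h1 : 0 < c1) (h2 : 0 < c2) (hc : c1 + c2 = 1)
    (ha : m ≤ a) (hb : m ≤ b) (he : c1*a + c2*b = m) : a = m ∧ b = m := by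
  have hm : c1*m + c2*m = m := by linear_combination m*hc
  have hcb := mul_le_mul_of_nonneg_left hb h2.le
  have hca := mul_le_mul_of_nonneg_left ha h1.le
  have h3 : a ≤ m := by
    have : c1*a ≤ c1*m := by linarith
    exact (mul_le_mul_iff_right₀ h1).1 this
  have h4 : b ≤ m := by
    have : c2*b ≤ c2*m := by linarith
    exact (mul_le_mul_iff_right₀ h2).1 this
  exact ⟨le_antisymm h3 ha, le_antisymm h4 hb⟩

include hv h0 in
lemma abstract_main (hnorm : v (true, []) + v (false, []) = 2) :
    ∀ F, v (F, []) = 1 ∧ v (F, [false]) = 1 ∧ v (F, [true]) = 1 ∧ v (F, [true, true]) = 1 := by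
  have hg := v_ge_m0 v hv h0
  have hx := xx_pos; have hy := yy_pos; have h1x := one_sub_xx_pos
  have hsum := sum_id
  -- the minimum is attained at one of the two empty states
  have key : ∀ F0, v (F0, []) = m0 v →
      v (F0, []) = m0 v ∧ v (F0, [false]) = m0 v ∧ v (F0, [true]) = m0 v ∧
      v (F0, [true,true]) = m0 v ∧ v (!F0, []) = m0 v ∧ v (!F0, [false]) = m0 v := by
    intro F0 hF0
    have e1 := hv (F0, [])
    rw [T_nil, hF0] at e1
    obtain ⟨hb1, hB1⟩ := pin (by linarith) (by linarith) (by linarith)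
      (hg (F0, [false])) (hg (F0, [true])) e1
    have e2 := hv (F0, [true])
    rw [T_t, hB1] at e2
    obtain ⟨hb2, hB2⟩ := pin h1x hx (by ring) (hg (!F0, [false])) (hg (F0, [true,true])) e2
    have e3 := hv (!F0, [false])
    rw [T_f, hb2] at e3
    obtain ⟨hb3, _⟩ := pin h1x hx (by ring) (hg (!F0, [])) (hg (!F0, [true,false])) e3
    exact ⟨hF0, hb1, hB1, hB2, hb3, hb2⟩
  -- pick the minimizing flag
  have hmin : v (true, []) = m0 v ∨ v (false, []) = m0 v := by
    unfold m0
    rcases le_total (v (true, [])) (v (false, [])) with h | h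
    · left; exact (min_eq_left h).symm
    · right; exact (min_eq_right h).symm
  have main : ∀ F0, v (F0, []) = m0 v → ∀ F, v (F, []) = 1 ∧ v (F, [false]) = 1 ∧
      v (F, [true]) = 1 ∧ v (F, [true, true]) = 1 := by
    intro F0 hF0
    obtain ⟨k1, k2, k3, k4, k5, k6⟩ := key F0 hF0
    -- m0 = 1 from normalization
    have hm1 : m0 v = 1 := by
      have : v (F0, []) + v (!F0, []) = 2 := by
        cases F0
        · simpa [add_comm] using hnorm
        · simpa using hnorm
      rw [k1, k5] at this; linarith
    -- propagate on the other flag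
    have e4 := hv (!F0, [])
    rw [T_nil, k5] at e4
    obtain ⟨l1, l2⟩ := pin (by linarith) (by linarith) (by linarith)
      (hg (!F0, [false])) (hg (!F0, [true])) e4
    have e5 := hv (!F0, [true])
    rw [T_t, l2] at e5
    obtain ⟨l3, l4⟩ := pin h1x hx (by ring) (hg (!(!F0), [false])) (hg (!F0, [true,true])) e5
    intro F
    have hFF : F = F0 ∨ F = !F0 := by cases F <;> cases F0 <;> simp
    rcases hFF with rfl | rfl
    · exact ⟨by rw [k1, hm1], by rw [k2, hm1], by rw [k3, hm1], by rw [k4, hm1]⟩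
    · exact ⟨by rw [k5, hm1], by rw [k6, hm1], by rw [l2, hm1], by rw [l4, hm1]⟩
  rcases hmin with h | h
  · exact main true h
  · exact main false h

end Harmonic



/-! ### prepend operation and normal forms of the two moves -/

def pc (c : Rad) (x : ℕ → Rad) : ℕ → Rad := fun n => match n with
  | 0 => c
  | Nat.succ k => x k

@[simp] lemma pc_zero (c : Rad) (x : ℕ → Rad) : pc c x 0 = c := rfl
@[simp] lemma pc_succ (c : Rad) (x : ℕ → Rad) (n : ℕ) : pc c x (n+1) = x n := rfl

variable {x : ℕ → Rad}

lemma red_succ (hx : Reduced x) {n : ℕ} (h : x n ≠ Rad.a) : x (n+1) = Rad.a := by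
  have := hx n
  unfold radOk at this
  by_contra h'
  exact h (this.mpr h')

lemma red_succ' (hx : Reduced x) {n : ℕ} (h : x n = Rad.a) : x (n+1) ≠ Rad.a := by
  have := hx n
  unfold radOk at this
  exact this.mp h

lemma act_ab (x : ℕ → Rad) : act [Rad.a, Rad.b] x = consRed Rad.a (consRed Rad.b x) := rfl
lemma act_ba (x : ℕ → Rad) : act [Rad.b, Rad.a] x = consRed Rad.b (consRed Rad.a x) := rfl

lemma consRed_b_a (h : x 0 = Rad.a) : consRed Rad.b x = pc Rad.b x := by
  unfold consRed; rw [h]; try rfl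
lemma consRed_a_a (h : x 0 = Rad.a) : consRed Rad.a x = fun n => x (n+1) := by
  unfold consRed; rw [h]; try rfl
lemma consRed_b_b (h : x 0 = Rad.b) : consRed Rad.b x = Function.update x 0 Rad.B := by
  unfold consRed; rw [h]; try rfl
lemma consRed_b_B (h : x 0 = Rad.B) : consRed Rad.b x = fun n => x (n+1) := by
  unfold consRed; rw [h]; try rfl
lemma consRed_a_b (h : x 0 = Rad.b) : consRed Rad.a x = pc Rad.a x := by
  unfold consRed; rw [h]; try rfl
lemma consRed_a_B (h : x 0 = Rad.B) : consRed Rad.a x = pc Rad.a x := by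
  unfold consRed; rw [h]; try rfl

lemma f_a (h : x 0 = Rad.a) : act [Rad.a, Rad.b] x = pc Rad.a (pc Rad.b x) := by
  rw [act_ab, consRed_b_a h, consRed_a_b (by simp)]
lemma f_b (h : x 0 = Rad.b) : act [Rad.a, Rad.b] x = pc Rad.a (Function.update x 0 Rad.B) := by
  rw [act_ab, consRed_b_b h, consRed_a_B (by simp [Function.update])]
lemma f_B (hx : Reduced x) (h : x 0 = Rad.B) : act [Rad.a, Rad.b] x = fun n => x (n+2) := by
  have h1 : x 1 = Rad.a := red_succ hx (by rw [h]; exact fun hh => Rad.noConfusion hh)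
  rw [act_ab, consRed_b_B h, consRed_a_a (by simpa using h1)]
lemma g_b (h : x 0 = Rad.b) : act [Rad.b, Rad.a] x = pc Rad.b (pc Rad.a x) := by
  rw [act_ba, consRed_a_b h, consRed_b_a (by simp)]
lemma g_B (h : x 0 = Rad.B) : act [Rad.b, Rad.a] x = pc Rad.b (pc Rad.a x) := by
  rw [act_ba, consRed_a_B h, consRed_b_a (by simp)]
lemma g_ab (h : x 0 = Rad.a) (h1 : x 1 = Rad.b) :
    act [Rad.b, Rad.a] x = Function.update (fun n => x (n+1)) 0 Rad.B := by
  rw [act_ba, consRed_a_a h, consRed_b_b (by simpa using h1)]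
lemma g_aB (h : x 0 = Rad.a) (h1 : x 1 = Rad.B) :
    act [Rad.b, Rad.a] x = fun n => x (n+2) := by
  rw [act_ba, consRed_a_a h, consRed_b_B (by simpa using h1)]

/-! ### cylinders via bool strings -/

def ltr (c : Bool) : Rad := if c then Rad.B else Rad.b

@[simp] lemma ltr_ne_a (c : Bool) : ltr c ≠ Rad.a := by cases c <;> simp [ltr]

def MQ : List Bool → (ℕ → Rad) → ℕ → Prop
  | [], _, _ => True
  | c :: s, x, k => x k = ltr c ∧ x (k+1) = Rad.a ∧ MQ s x (k+2)

lemma MQ_congr (s : List Bool) {x y : ℕ → Rad} :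
    ∀ {k m : ℕ}, (∀ i, x (k+i) = y (m+i)) → (MQ s x k ↔ MQ s y m) := by
  induction s with
  | nil => intro k m _; simp [MQ]
  | cons c s ih =>
    intro k m h
    have h0 : x k = y m := by simpa using h 0
    have h1 : x (k+1) = y (m+1) := by simpa using h 1
    have h2 : ∀ i, x (k+2+i) = y (m+2+i) := by
      intro i
      have := h (2+i)
      rwa [← Nat.add_assoc, ← Nat.add_assoc] at this
    simp only [MQ, h0, h1, ih h2]

lemma MQ_pc (s : List Bool) {c : Rad} {x : ℕ → Rad} {k : ℕ} :
    MQ s (pc c x) (k+1) ↔ MQ s x k :=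
  MQ_congr s (fun i => by
    show pc c x (k+1+i) = x (k+i)
    have : k+1+i = (k+i)+1 := by omega
    rw [this]; rfl)

lemma MQ_shift (s : List Bool) {x : ℕ → Rad} {j k : ℕ} :
    MQ s (fun n => x (n+j)) k ↔ MQ s x (k+j) :=
  MQ_congr s (fun i => by
    show x (k+i+j) = x (k+j+i)
    congr 1; omega)

lemma MQ_update (s : List Bool) {v : Rad} {x : ℕ → Rad} {k : ℕ} :
    MQ s (Function.update x 0 v) (k+1) ↔ MQ s x (k+1) :=
  MQ_congr s (fun i => by
    show Function.update x 0 v (k+1+i) = x (k+1+i)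
    apply Function.update_of_ne
    omega)

lemma MQ_pc_upd3 (s : List Bool) {c v : Rad} {x : ℕ → Rad} :
    MQ s (pc c (Function.update x 0 v)) 3 ↔ MQ s x 2 :=
  MQ_congr s (fun i => by
    show pc c (Function.update x 0 v) (3+i) = x (2+i)
    have h3 : 3+i = (2+i)+1 := by omega
    rw [h3, pc_succ]
    apply Function.update_of_ne
    omega)

lemma MQ_upd_shift2 (s : List Bool) {v : Rad} {x : ℕ → Rad} :
    MQ s (Function.update (fun n => x (n+1)) 0 v) 2 ↔ MQ s x 3 :=
  MQ_congr s (fun i => by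
    show Function.update (fun n => x (n+1)) 0 v (2+i) = x (3+i)
    rw [Function.update_of_ne (by omega)]
    show x (2+i+1) = x (3+i)
    congr 1; omega)

def SPm (s : List Bool) : Set (ℕ → Rad) := {x | x 0 = Rad.a ∧ MQ s x 1}

def SQm : List Bool → Set (ℕ → Rad)
  | [] => {x | x 0 ≠ Rad.a}
  | c :: s => {x | MQ (c :: s) x 0}

lemma mem_SPm {s : List Bool} : x ∈ SPm s ↔ x 0 = Rad.a ∧ MQ s x 1 := Iff.rfl
lemma mem_SQm_cons {c : Bool} {s : List Bool} :
    x ∈ SQm (c :: s) ↔ x 0 = ltr c ∧ x 1 = Rad.a ∧ MQ s x 2 := Iff.rfl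

/-! ### the eight preimage computations on reduced points -/

lemma MQ_pc2 (s : List Bool) {c d : Rad} {x : ℕ → Rad} {k : ℕ} :
    MQ s (pc c (pc d x)) (k+2) ↔ MQ s x k := by
  rw [show k+2 = (k+1)+1 from rfl, MQ_pc, MQ_pc]

section Preimages

lemma x1_cases (hx : Reduced x) (h : x 0 = Rad.a) : x 1 = Rad.b ∨ x 1 = Rad.B := by
  have := red_succ' hx h
  cases h1 : x 1 <;> simp_all

lemma L1f (hx : Reduced x) (s : List Bool) : act [Rad.a, Rad.b] x ∈ SPm (false :: s) ↔ x ∈ SPm s := by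
  cases h0 : x 0 with
  | a =>
    rw [f_a h0]
    constructor
    · rintro ⟨-, -, -, hm⟩
      exact ⟨h0, by rwa [MQ_pc2] at hm⟩
    · rintro ⟨-, hm⟩
      refine ⟨rfl, rfl, h0, ?_⟩
      rwa [MQ_pc2]
  | b =>
    rw [f_b h0]
    constructor
    · rintro ⟨-, hb, -⟩
      exact absurd hb (by simp [ltr, Function.update])
    · rintro ⟨ha, -⟩
      exact absurd (h0 ▸ ha) (by simp)
  | B =>
    rw [f_B hx h0]
    have h2 : x 2 ≠ Rad.a := red_succ' hx (red_succ hx (by simp [h0]))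
    constructor
    · rintro ⟨ha, -⟩
      exact absurd ha h2
    · rintro ⟨ha, -⟩
      exact absurd (h0 ▸ ha) (by simp)


lemma SQm_ne_a {s : List Bool} (h : x ∈ SQm s) : x 0 ≠ Rad.a := by
  cases s with
  | nil => exact h
  | cons c s' => rw [mem_SQm_cons] at h; rw [h.1]; simp

lemma L1g (hx : Reduced x) (s : List Bool) :
    act [Rad.b, Rad.a] x ∈ SPm (false :: s) ↔ x ∈ SPm (true :: false :: s) := by
  cases h0 : x 0 with
  | a =>
    rcases x1_cases hx h0 with h1 | h1
    · rw [g_ab h0 h1]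
      constructor
      · rintro ⟨hz, -⟩
        exact absurd hz (by simp [Function.update])
      · rintro ⟨-, hB, -⟩
        rw [h1] at hB; exact absurd hB (by simp [ltr])
    · rw [g_aB h0 h1]
      constructor
      · rintro ⟨h2, h3, h4, hm⟩
        refine ⟨h0, h1, h2, h3, h4, ?_⟩
        rwa [MQ_shift] at hm
      · rintro ⟨-, -, h2, h3, h4, hm⟩
        exact ⟨h2, h3, h4, by rwa [MQ_shift]⟩
  | b =>
    rw [g_b h0]
    constructor
    · rintro ⟨hz, -⟩; exact absurd hz (by simp)
    · rintro ⟨ha, -⟩; rw [h0] at ha; exact absurd ha (by simp)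
  | B =>
    rw [g_B h0]
    constructor
    · rintro ⟨hz, -⟩; exact absurd hz (by simp)
    · rintro ⟨ha, -⟩; rw [h0] at ha; exact absurd ha (by simp)

lemma L2f (hx : Reduced x) (s : List Bool) :
    act [Rad.a, Rad.b] x ∈ SPm (true :: s) ↔ x ∈ SQm (false :: s) := by
  cases h0 : x 0 with
  | a =>
    rw [f_a h0]
    constructor
    · rintro ⟨-, hz, -⟩; exact absurd hz (by simp [ltr])
    · rintro ⟨ha, -⟩; rw [h0] at ha; exact absurd ha (by simp [ltr])
  | b =>
    rw [f_b h0]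
    constructor
    · rintro ⟨-, -, h2, hm⟩
      refine ⟨by simpa [ltr] using h0, by simpa [Function.update] using h2, ?_⟩
      show MQ s x 2
      norm_num at hm
      rwa [MQ_pc_upd3] at hm
    · rintro ⟨-, h1, hm⟩
      refine ⟨rfl, by simp [Function.update, ltr], by simpa [Function.update] using h1, ?_⟩
      show MQ s (pc Rad.a (Function.update x 0 Rad.B)) 3
      rw [MQ_pc_upd3]
      exact hm
  | B =>
    rw [f_B hx h0]
    have h2 : x 2 ≠ Rad.a := red_succ' hx (red_succ hx (by simp [h0]))
    constructor
    · rintro ⟨ha, -⟩; exact absurd ha h2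
    · rintro ⟨ha, -⟩; rw [h0] at ha; exact absurd ha (by simp [ltr])

lemma L2g (hx : Reduced x) (s : List Bool) :
    act [Rad.b, Rad.a] x ∈ SPm (true :: s) ↔ x ∈ SPm (true :: true :: s) := by
  cases h0 : x 0 with
  | a =>
    rcases x1_cases hx h0 with h1 | h1
    · rw [g_ab h0 h1]
      constructor
      · rintro ⟨hz, -⟩; exact absurd hz (by simp [Function.update])
      · rintro ⟨-, hB, -⟩; rw [h1] at hB; exact absurd hB (by simp [ltr])
    · rw [g_aB h0 h1]
      constructor
      · rintro ⟨h2, h3, h4, hm⟩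
        exact ⟨h0, by simpa [ltr] using h1, h2, h3, h4, by rwa [MQ_shift] at hm⟩
      · rintro ⟨-, -, h2, h3, h4, hm⟩
        exact ⟨h2, h3, h4, by rwa [MQ_shift]⟩
  | b =>
    rw [g_b h0]
    constructor
    · rintro ⟨hz, -⟩; exact absurd hz (by simp)
    · rintro ⟨ha, -⟩; rw [h0] at ha; exact absurd ha (by simp)
  | B =>
    rw [g_B h0]
    constructor
    · rintro ⟨hz, -⟩; exact absurd hz (by simp)
    · rintro ⟨ha, -⟩; rw [h0] at ha; exact absurd ha (by simp)

lemma L3f (hx : Reduced x) (s : List Bool) :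
    act [Rad.a, Rad.b] x ∈ SQm (false :: s) ↔ x ∈ SQm (true :: false :: s) := by
  cases h0 : x 0 with
  | a =>
    rw [f_a h0]
    constructor
    · rintro ⟨hz, -⟩; exact absurd hz (by simp [ltr])
    · rintro ⟨ha, -⟩; rw [h0] at ha; exact absurd ha (by simp [ltr])
  | b =>
    rw [f_b h0]
    constructor
    · rintro ⟨hz, -⟩; exact absurd hz (by simp [ltr])
    · rintro ⟨ha, -⟩; rw [h0] at ha; exact absurd ha (by simp [ltr])
  | B =>
    rw [f_B hx h0]
    have h1 : x 1 = Rad.a := red_succ hx (by simp [h0])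
    constructor
    · rintro ⟨h2, h3, hm⟩
      exact ⟨by simpa [ltr] using h0, h1, h2, h3, by rwa [MQ_shift] at hm⟩
    · rintro ⟨-, -, h2, h3, hm⟩
      exact ⟨h2, h3, by rwa [MQ_shift]⟩

lemma L3g (hx : Reduced x) (s : List Bool) :
    act [Rad.b, Rad.a] x ∈ SQm (false :: s) ↔ x ∈ SQm s := by
  cases h0 : x 0 with
  | a =>
    rcases x1_cases hx h0 with h1 | h1
    · rw [g_ab h0 h1]
      constructor
      · rintro ⟨hz, -⟩; exact absurd hz (by simp [Function.update, ltr])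
      · intro h; exact absurd h0 (SQm_ne_a h)
    · rw [g_aB h0 h1]
      have h2 : x 2 = Rad.a := red_succ hx (by simp [h1])
      constructor
      · rintro ⟨hz, -⟩
        rw [show (fun n => x (n+2)) 0 = x 2 from rfl, h2] at hz
        exact absurd hz (by simp [ltr])
      · intro h; exact absurd h0 (SQm_ne_a h)
  | b =>
    rw [g_b h0]
    constructor
    · rintro ⟨-, -, hm⟩
      rw [MQ_pc2] at hm
      cases s with
      | nil => show x 0 ≠ Rad.a; simp [h0]
      | cons c s' => exact hm
    · intro h
      refine ⟨rfl, rfl, ?_⟩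
      rw [MQ_pc2]
      cases s with
      | nil => trivial
      | cons c s' => exact h
  | B =>
    rw [g_B h0]
    constructor
    · rintro ⟨-, -, hm⟩
      rw [MQ_pc2] at hm
      cases s with
      | nil => show x 0 ≠ Rad.a; simp [h0]
      | cons c s' => exact hm
    · intro h
      refine ⟨rfl, rfl, ?_⟩
      rw [MQ_pc2]
      cases s with
      | nil => trivial
      | cons c s' => exact h

lemma L4f (hx : Reduced x) (s : List Bool) :
    act [Rad.a, Rad.b] x ∈ SQm (true :: s) ↔ x ∈ SQm (true :: true :: s) := by
  cases h0 : x 0 with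
  | a =>
    rw [f_a h0]
    constructor
    · rintro ⟨hz, -⟩; exact absurd hz (by simp [ltr])
    · rintro ⟨ha, -⟩; rw [h0] at ha; exact absurd ha (by simp [ltr])
  | b =>
    rw [f_b h0]
    constructor
    · rintro ⟨hz, -⟩; exact absurd hz (by simp [ltr])
    · rintro ⟨ha, -⟩; rw [h0] at ha; exact absurd ha (by simp [ltr])
  | B =>
    rw [f_B hx h0]
    have h1 : x 1 = Rad.a := red_succ hx (by simp [h0])
    constructor
    · rintro ⟨h2, h3, hm⟩
      exact ⟨by simpa [ltr] using h0, h1, h2, h3, by rwa [MQ_shift] at hm⟩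
    · rintro ⟨-, -, h2, h3, hm⟩
      exact ⟨h2, h3, by rwa [MQ_shift]⟩

lemma L4g (hx : Reduced x) (s : List Bool) :
    act [Rad.b, Rad.a] x ∈ SQm (true :: s) ↔ x ∈ SPm (false :: s) := by
  cases h0 : x 0 with
  | a =>
    rcases x1_cases hx h0 with h1 | h1
    · rw [g_ab h0 h1]
      constructor
      · rintro ⟨-, h2, hm⟩
        refine ⟨h0, by simpa [ltr] using h1, by simpa [Function.update] using h2, ?_⟩
        show MQ s x 3
        norm_num at hm
        rwa [MQ_upd_shift2] at hm
      · rintro ⟨-, -, h2, hm⟩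
        refine ⟨by simp [Function.update, ltr], by simpa [Function.update] using h2, ?_⟩
        show MQ s (Function.update (fun n => x (n+1)) 0 Rad.B) 2
        rw [MQ_upd_shift2]
        exact hm
    · rw [g_aB h0 h1]
      have h2 : x 2 = Rad.a := red_succ hx (by simp [h1])
      constructor
      · rintro ⟨hz, -⟩
        rw [show (fun n => x (n+2)) 0 = x 2 from rfl, h2] at hz
        exact absurd hz (by simp [ltr])
      · rintro ⟨-, hb, -⟩
        rw [h1] at hb; exact absurd hb (by simp [ltr])
  | b =>
    rw [g_b h0]
    constructor
    · rintro ⟨hz, -⟩; exact absurd hz (by simp [ltr])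
    · rintro ⟨ha, -⟩; rw [h0] at ha; exact absurd ha (by simp)
  | B =>
    rw [g_B h0]
    constructor
    · rintro ⟨hz, -⟩; exact absurd hz (by simp [ltr])
    · rintro ⟨ha, -⟩; rw [h0] at ha; exact absurd ha (by simp)

end Preimages

/-! ### measurability -/

instance : MeasurableSingletonClass Rad :=
  ⟨fun _ => MeasurableSpace.measurableSet_top⟩

instance : Countable Rad := by
  have : Function.Injective (fun r : Rad => (match r with
    | Rad.a => 0 | Rad.b => 1 | Rad.B => 2 : ℕ)) := by
    intro r1 r2 h; cases r1 <;> cases r2 <;> simp_all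
  exact ⟨_, this⟩

def Gfun (r : Rad) (n : ℕ) : Rad × Rad × Rad × Rad → Rad := fun p =>
  match r, p.1 with
  | .a, .a => p.2.1
  | .b, .b => if n = 0 then Rad.B else p.2.2.1
  | .b, .B => p.2.1
  | .B, .B => if n = 0 then Rad.b else p.2.2.1
  | .B, .b => p.2.1
  | _, _ => if n = 0 then r else p.2.2.2

lemma consRed_eq_G (r : Rad) (n : ℕ) (x : ℕ → Rad) :
    consRed r x n = Gfun r n (x 0, x (n+1), x n, x (n-1)) := by
  cases r <;> cases h : x 0 <;> cases n <;>
    simp [consRed, Gfun, h, Function.update]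

lemma meas_consRed (r : Rad) : Measurable (consRed r) := by
  refine measurable_pi_lambda _ (fun n => ?_)
  have heq : (fun x : ℕ → Rad => consRed r x n)
      = fun x => Gfun r n (x 0, x (n+1), x n, x (n-1)) := by
    funext x; exact consRed_eq_G r n x
  rw [heq]
  exact (measurable_of_countable (fun p : Rad × Rad × Rad × Rad => Gfun r n p)).comp
    ((measurable_pi_apply 0).prodMk ((measurable_pi_apply (n+1)).prodMk
      ((measurable_pi_apply n).prodMk (measurable_pi_apply (n-1)))))

lemma meas_act_ab : Measurable (act [Rad.a, Rad.b]) := by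
  have : act [Rad.a, Rad.b] = (consRed Rad.a) ∘ (consRed Rad.b) := rfl
  rw [this]; exact (meas_consRed Rad.a).comp (meas_consRed Rad.b)

lemma meas_act_ba : Measurable (act [Rad.b, Rad.a]) := by
  have : act [Rad.b, Rad.a] = (consRed Rad.b) ∘ (consRed Rad.a) := rfl
  rw [this]; exact (meas_consRed Rad.b).comp (meas_consRed Rad.a)

lemma meas_coord (k : ℕ) (c : Rad) : MeasurableSet {x : ℕ → Rad | x k = c} := by
  have : {x : ℕ → Rad | x k = c} = (fun x : ℕ → Rad => x k)⁻¹' {c} := by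
    ext x; simp
  rw [this]
  exact measurable_pi_apply k (Set.to_countable {c}).measurableSet

lemma meas_MQ (s : List Bool) : ∀ (k : ℕ), MeasurableSet {x : ℕ → Rad | MQ s x k} := by
  induction s with
  | nil => intro k; exact MeasurableSet.univ
  | cons c s ih =>
    intro k
    have : {x : ℕ → Rad | MQ (c :: s) x k}
        = {x | x k = ltr c} ∩ ({x | x (k+1) = Rad.a} ∩ {x | MQ s x (k+2)}) := by
      ext x; simp [MQ, Set.mem_setOf_eq]
    rw [this]
    exact (meas_coord k (ltr c)).inter ((meas_coord (k+1) Rad.a).inter (ih (k+2)))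

lemma meas_SPm (s : List Bool) : MeasurableSet (SPm s) := by
  have : SPm s = {x | x 0 = Rad.a} ∩ {x | MQ s x 1} := rfl
  rw [this]; exact (meas_coord 0 Rad.a).inter (meas_MQ s 1)

lemma meas_SQm (s : List Bool) : MeasurableSet (SQm s) := by
  cases s with
  | nil =>
    have : SQm [] = {x : ℕ → Rad | x 0 = Rad.a}ᶜ := by
      ext x; simp [SQm]
    rw [this]; exact (meas_coord 0 Rad.a).compl
  | cons c s' => exact meas_MQ (c :: s') 0

lemma meas_Reduced : MeasurableSet {x : ℕ → Rad | Reduced x} := by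
  have : {x : ℕ → Rad | Reduced x} = ⋂ n, {x | radOk (x n) (x (n+1))} := by
    ext x; simp [Reduced, Set.mem_iInter]
  rw [this]
  apply MeasurableSet.iInter
  intro n
  have : {x : ℕ → Rad | radOk (x n) (x (n+1))}
      = (fun x : ℕ → Rad => (x n, x (n+1)))⁻¹' {p | radOk p.1 p.2} := rfl
  rw [this]
  exact ((measurable_pi_apply n).prodMk (measurable_pi_apply (n+1)))
    (show MeasurableSet {p : Rad × Rad | radOk p.1 p.2} from
      (Set.to_countable _).measurableSet)

lemma k1 : 2*(1-xx) = (2*yy)⁻¹ := by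
  have hy := yy_pos
  have h2 : (2*yy) ≠ 0 := by positivity
  field_simp
  linear_combination id1

lemma k3 : 2*xx*(2*xx)⁻¹ = 1 := by
  have hx := xx_pos
  field_simp

lemma k4 : 2*yy*(2*yy)⁻¹ = 1 := by
  have hy := yy_pos
  field_simp

lemma k2 : (1-xx) * (2*yy)⁻¹ * 2 = (2*xx)⁻¹ := by
  have hx := xx_pos; have hy := yy_pos
  have h2 : 1 - xx > 0 := by linarith [xx_lt_one]
  field_simp
  linear_combination (-1 : ℝ) * id2

/-! ### the measure relations -/

lemma toReal_half_comb {A B C : ENNReal} (hB : B ≠ ⊤) (hC : C ≠ ⊤)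
    (h : A = 1/2 * B + 1/2 * C) : A.toReal = 1/2 * B.toReal + 1/2 * C.toReal := by
  rw [h, ENNReal.toReal_add (ENNReal.mul_ne_top (by norm_num) hB)
      (ENNReal.mul_ne_top (by norm_num) hC), ENNReal.toReal_mul, ENNReal.toReal_mul]
  norm_num


section Measures

variable (ν : Measure (ℕ → Rad)) [IsProbabilityMeasure ν]

lemma ae_red (hred : ν {x | Reduced x} = 1) : ∀ᵐ x ∂ν, Reduced x := by
  have h1 : ν {x | Reduced x}ᶜ = 0 := by
    rw [measure_compl meas_Reduced (measure_ne_top ν _), hred, measure_univ]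
    simp
  rw [MeasureTheory.ae_iff]
  exact h1

lemma nu_congr (hred : ν {x | Reduced x} = 1) {X Y : Set (ℕ → Rad)}
    (h : ∀ x, Reduced x → (x ∈ X ↔ x ∈ Y)) : ν X = ν Y := by
  apply measure_congr
  filter_upwards [ae_red ν hred] with x hx
  exact eq_iff_iff.mpr (h x hx)

omit [IsProbabilityMeasure ν] in
lemma station (hstat : ν = (1 / 2 : ENNReal) • ν.map (act [Rad.a, Rad.b])
      + (1 / 2 : ENNReal) • ν.map (act [Rad.b, Rad.a]))
    (S : Set (ℕ → Rad)) (hS : MeasurableSet S) :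
    ν S = 1/2 * ν (act [Rad.a, Rad.b] ⁻¹' S) + 1/2 * ν (act [Rad.b, Rad.a] ⁻¹' S) := by
  conv_lhs => rw [hstat]
  rw [Measure.add_apply, Measure.smul_apply, Measure.smul_apply,
    Measure.map_apply meas_act_ab hS, Measure.map_apply meas_act_ba hS,
    smul_eq_mul, smul_eq_mul]

variable (hred : ν {x | Reduced x} = 1)
variable (hstat : ν = (1 / 2 : ENNReal) • ν.map (act [Rad.a, Rad.b])
      + (1 / 2 : ENNReal) • ν.map (act [Rad.b, Rad.a]))

include hred hstat in
lemma relP_f_E (s : List Bool) :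
    ν (SPm (false :: s)) = 1/2 * ν (SPm s) + 1/2 * ν (SPm (true :: false :: s)) := by
  rw [station ν hstat _ (meas_SPm _),
    nu_congr ν hred (X := act [Rad.a, Rad.b] ⁻¹' (SPm (false :: s))) (Y := SPm s) (fun x hx => L1f hx s),
    nu_congr ν hred (X := act [Rad.b, Rad.a] ⁻¹' (SPm (false :: s))) (Y := SPm (true :: false :: s)) (fun x hx => L1g hx s)]

include hred hstat in
lemma relP_t_E (s : List Bool) :
    ν (SPm (true :: s)) = 1/2 * ν (SQm (false :: s)) + 1/2 * ν (SPm (true :: true :: s)) := by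
  rw [station ν hstat _ (meas_SPm _),
    nu_congr ν hred (X := act [Rad.a, Rad.b] ⁻¹' (SPm (true :: s))) (Y := SQm (false :: s)) (fun x hx => L2f hx s),
    nu_congr ν hred (X := act [Rad.b, Rad.a] ⁻¹' (SPm (true :: s))) (Y := SPm (true :: true :: s)) (fun x hx => L2g hx s)]

include hred hstat in
lemma relQ_f_E (s : List Bool) :
    ν (SQm (false :: s)) = 1/2 * ν (SQm (true :: false :: s)) + 1/2 * ν (SQm s) := by
  rw [station ν hstat _ (meas_SQm _),
    nu_congr ν hred (X := act [Rad.a, Rad.b] ⁻¹' (SQm (false :: s))) (Y := SQm (true :: false :: s)) (fun x hx => L3f hx s),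
    nu_congr ν hred (X := act [Rad.b, Rad.a] ⁻¹' (SQm (false :: s))) (Y := SQm s) (fun x hx => L3g hx s)]

include hred hstat in
lemma relQ_t_E (s : List Bool) :
    ν (SQm (true :: s)) = 1/2 * ν (SQm (true :: true :: s)) + 1/2 * ν (SPm (false :: s)) := by
  rw [station ν hstat _ (meas_SQm _),
    nu_congr ν hred (X := act [Rad.a, Rad.b] ⁻¹' (SQm (true :: s))) (Y := SQm (true :: true :: s)) (fun x hx => L4f hx s),
    nu_congr ν hred (X := act [Rad.b, Rad.a] ⁻¹' (SQm (true :: s))) (Y := SPm (false :: s)) (fun x hx => L4g hx s)]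

include hred in
lemma relP_nil_E : ν (SPm []) = ν (SPm [false]) + ν (SPm [true]) := by
  have hU : ν (SPm []) = ν (SPm [false] ∪ SPm [true]) := by
    apply nu_congr ν hred
    intro x hx
    constructor
    · rintro ⟨h0, -⟩
      have h1 : x 1 ≠ Rad.a := red_succ' hx h0
      have h2 : x 2 = Rad.a := red_succ hx h1
      rcases x1_cases hx h0 with hb | hB
      · exact Or.inl ⟨h0, by simpa [ltr] using hb, h2, trivial⟩
      · exact Or.inr ⟨h0, by simpa [ltr] using hB, h2, trivial⟩
    · rintro (⟨h0, -⟩ | ⟨h0, -⟩) <;> exact ⟨h0, trivial⟩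
  rw [hU]
  apply measure_union _ (meas_SPm [true])
  rw [Set.disjoint_left]
  rintro x ⟨-, h1, -⟩ ⟨-, h2, -⟩
  rw [h1] at h2
  exact absurd h2 (by simp [ltr])

include hred in
lemma relQ_nil_E : ν (SQm []) = ν (SQm [false]) + ν (SQm [true]) := by
  have hU : ν (SQm []) = ν (SQm [false] ∪ SQm [true]) := by
    apply nu_congr ν hred
    intro x hx
    constructor
    · intro h0
      have h1 : x 1 = Rad.a := red_succ hx h0
      cases hc : x 0 with
      | a => exact absurd hc h0
      | b => exact Or.inl ⟨by simpa [ltr] using hc, h1, trivial⟩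
      | B => exact Or.inr ⟨by simpa [ltr] using hc, h1, trivial⟩
    · rintro (⟨h0, -⟩ | ⟨h0, -⟩) <;>
        { show x 0 ≠ Rad.a; rw [h0]; simp [ltr] }
  rw [hU]
  apply measure_union _ (meas_SQm [true])
  rw [Set.disjoint_left]
  rintro x ⟨h1, -⟩ ⟨h2, -⟩
  rw [h1] at h2
  exact absurd h2 (by simp [ltr])

lemma norm_E : ν (SPm []) + ν (SQm []) = 1 := by
  have hc : SQm [] = (SPm [])ᶜ := by
    ext x
    simp [SQm, SPm, MQ, Set.mem_setOf_eq]
  rw [hc, measure_add_measure_compl (meas_SPm [])]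
  exact measure_univ

/-! ### real-valued relations -/

noncomputable def mP (s : List Bool) : ℝ := (ν (SPm s)).toReal
noncomputable def mQ (s : List Bool) : ℝ := (ν (SQm s)).toReal


include hred hstat in
lemma relP_f_R (s : List Bool) :
    mP ν (false :: s) = 1/2 * mP ν s + 1/2 * mP ν (true :: false :: s) :=
  toReal_half_comb (measure_ne_top ν _) (measure_ne_top ν _) (relP_f_E ν hred hstat s)

include hred hstat in
lemma relP_t_R (s : List Bool) :
    mP ν (true :: s) = 1/2 * mQ ν (false :: s) + 1/2 * mP ν (true :: true :: s) :=
  toReal_half_comb (measure_ne_top ν _) (measure_ne_top ν _) (relP_t_E ν hred hstat s)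

include hred hstat in
lemma relQ_f_R (s : List Bool) :
    mQ ν (false :: s) = 1/2 * mQ ν (true :: false :: s) + 1/2 * mQ ν s :=
  toReal_half_comb (measure_ne_top ν _) (measure_ne_top ν _) (relQ_f_E ν hred hstat s)

include hred hstat in
lemma relQ_t_R (s : List Bool) :
    mQ ν (true :: s) = 1/2 * mQ ν (true :: true :: s) + 1/2 * mP ν (false :: s) :=
  toReal_half_comb (measure_ne_top ν _) (measure_ne_top ν _) (relQ_t_E ν hred hstat s)

include hred in
lemma relP_nil_R : mP ν [] = mP ν [false] + mP ν [true] := by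
  unfold mP
  rw [relP_nil_E ν hred, ENNReal.toReal_add (measure_ne_top ν _) (measure_ne_top ν _)]

include hred in
lemma relQ_nil_R : mQ ν [] = mQ ν [false] + mQ ν [true] := by
  unfold mQ
  rw [relQ_nil_E ν hred, ENNReal.toReal_add (measure_ne_top ν _) (measure_ne_top ν _)]

lemma norm_R : mP ν [] + mQ ν [] = 1 := by
  unfold mP mQ
  rw [← ENNReal.toReal_add (measure_ne_top ν _) (measure_ne_top ν _), norm_E ν]
  simp

lemma mP_nonneg (s : List Bool) : 0 ≤ mP ν s := ENNReal.toReal_nonneg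
lemma mQ_nonneg (s : List Bool) : 0 ≤ mQ ν s := ENNReal.toReal_nonneg

/-! ### the harmonic function -/

noncomputable def iw : List Bool → ℝ
  | [] => 1
  | c :: s => (if c then (2*xx)⁻¹ else (2*yy)⁻¹) * iw s

lemma iw_pos : ∀ s, 0 < iw s := by
  intro s; induction s with
  | nil => norm_num [iw]
  | cons c s ih =>
    have hx := xx_pos; have hy := yy_pos
    unfold iw
    cases c <;> simp only [if_true, if_false, Bool.false_eq_true] <;> positivity

noncomputable def vfun : St → ℝ := fun σ =>
  2 * (if σ.1 then mP ν σ.2 else mQ ν σ.2) * iw σ.2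

lemma vfun_nonneg : ∀ σ, 0 ≤ vfun ν σ := by
  rintro ⟨F, s⟩
  have := iw_pos s
  have h1 := mP_nonneg ν s
  have h2 := mQ_nonneg ν s
  unfold vfun
  cases F <;> simp only [if_true, if_false, Bool.false_eq_true] <;> positivity

include hred hstat in
lemma vfun_harmonic : ∀ σ, T (vfun ν) σ = vfun ν σ := by
  have hx := xx_pos; have hy := yy_pos
  have hk1 := k1; have hk2 := k2
  rintro ⟨F, _ | ⟨c, s⟩⟩
  · -- empty string: appending relation
    cases F
    · rw [T_nil]
      show 2*yy * (2 * mQ ν [false] * iw [false]) + 2*xx * (2 * mQ ν [true] * iw [true])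
        = 2 * mQ ν [] * iw []
      rw [relQ_nil_R ν hred]
      show 2*yy * (2 * mQ ν [false] * ((2*yy)⁻¹ * 1)) + 2*xx * (2 * mQ ν [true] * ((2*xx)⁻¹ * 1))
        = 2 * (mQ ν [false] + mQ ν [true]) * 1
      field_simp
    · rw [T_nil]
      show 2*yy * (2 * mP ν [false] * iw [false]) + 2*xx * (2 * mP ν [true] * iw [true])
        = 2 * mP ν [] * iw []
      rw [relP_nil_R ν hred]
      show 2*yy * (2 * mP ν [false] * ((2*yy)⁻¹ * 1)) + 2*xx * (2 * mP ν [true] * ((2*xx)⁻¹ * 1))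
        = 2 * (mP ν [false] + mP ν [true]) * 1
      field_simp
  · cases c
    · -- false-head
      cases F
      · rw [T_f]
        show (1-xx) * (2 * mQ ν s * iw s) + xx * (2 * mQ ν (true::false::s) * ((2*xx)⁻¹ * ((2*yy)⁻¹ * iw s)))
          = 2 * mQ ν (false::s) * ((2*yy)⁻¹ * iw s)
        rw [relQ_f_R ν hred hstat]
        field_simp
        linear_combination (iw s * mQ ν s) * id1
      · rw [T_f]
        show (1-xx) * (2 * mP ν s * iw s) + xx * (2 * mP ν (true::false::s) * ((2*xx)⁻¹ * ((2*yy)⁻¹ * iw s)))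
          = 2 * mP ν (false::s) * ((2*yy)⁻¹ * iw s)
        rw [relP_f_R ν hred hstat]
        field_simp
        linear_combination (iw s * mP ν s) * id1
    · -- true-head
      cases F
      · rw [T_t]
        show (1-xx) * (2 * mP ν (false::s) * ((2*yy)⁻¹ * iw s)) + xx * (2 * mQ ν (true::true::s) * ((2*xx)⁻¹ * ((2*xx)⁻¹ * iw s)))
          = 2 * mQ ν (true::s) * ((2*xx)⁻¹ * iw s)
        conv_rhs => rw [relQ_t_R ν hred hstat]
        field_simp
        linear_combination (-(iw s * mP ν (false::s))) * id2
      · rw [T_t]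
        show (1-xx) * (2 * mQ ν (false::s) * ((2*yy)⁻¹ * iw s)) + xx * (2 * mP ν (true::true::s) * ((2*xx)⁻¹ * ((2*xx)⁻¹ * iw s)))
          = 2 * mP ν (true::s) * ((2*xx)⁻¹ * iw s)
        conv_rhs => rw [relP_t_R ν hred hstat]
        field_simp
        linear_combination (-(iw s * mQ ν (false::s))) * id2

include hred in
lemma vfun_norm : vfun ν (true, []) + vfun ν (false, []) = 2 := by
  show 2 * mP ν [] * iw [] + 2 * mQ ν [] * iw [] = 2
  have := norm_R ν
  show 2 * mP ν [] * 1 + 2 * mQ ν [] * 1 = 2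
  linarith

include hred hstat in
lemma m_values :
    mP ν [] = 1/2 ∧ mQ ν [false] = yy ∧ mQ ν [true] = xx ∧ mQ ν [true, true] = 2*xx^2 := by
  have hx := xx_pos; have hy := yy_pos
  have habs := abstract_main (vfun ν) (vfun_harmonic ν hred hstat) (vfun_nonneg ν)
    (vfun_norm ν hred)
  obtain ⟨hP0, -, -, -⟩ := habs true
  obtain ⟨-, hQf, hQt, hQtt⟩ := habs false
  refine ⟨?_, ?_, ?_, ?_⟩
  · have : 2 * mP ν [] * iw [] = 1 := hP0
    show mP ν [] = 1/2
    rw [show iw [] = 1 from rfl] at this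
    linarith
  · have : 2 * mQ ν [false] * ((2*yy)⁻¹ * 1) = 1 := hQf
    have h2 : (2*yy) ≠ 0 := by positivity
    field_simp at this
    linarith
  · have : 2 * mQ ν [true] * ((2*xx)⁻¹ * 1) = 1 := hQt
    have h2 : (2*xx) ≠ 0 := by positivity
    field_simp at this
    linarith
  · have : 2 * mQ ν [true, true] * ((2*xx)⁻¹ * ((2*xx)⁻¹ * 1)) = 1 := hQtt
    have h2 : (2*xx) ≠ 0 := by positivity
    field_simp at this
    nlinarith [this]

end Measures

lemma mem_shadow1 {x : ℕ → Rad} {c : Rad} : x ∈ Shadow [c] ↔ x 0 = c := by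
  constructor
  · intro h; exact h ⟨0, by norm_num⟩
  · intro h i
    fin_cases i
    exact h

lemma mem_shadow3 {x : ℕ → Rad} {c d e : Rad} :
    x ∈ Shadow [c, d, e] ↔ x 0 = c ∧ x 1 = d ∧ x 2 = e := by
  constructor
  · intro h
    exact ⟨h ⟨0, by norm_num⟩, h ⟨1, by norm_num⟩, h ⟨2, by norm_num⟩⟩
  · rintro ⟨h0, h1, h2⟩ i
    fin_cases i
    exacts [h0, h1, h2]

lemma ennval {a : ENNReal} {r : ℝ} (ha : a ≠ ⊤) (h : a.toReal = r) :
    a = ENNReal.ofReal r := by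
  rw [← h, ENNReal.ofReal_toReal ha]

end StatProof


open StatProof in
/-- For the random walk on `PSL(2,ℤ)` driven by the uniform measure
on `{ab, ba}`, the hitting measure `ν` on the Gromov boundary (modelled as infinite
reduced normal forms; `ν` is the `μ`-stationary probability measure) satisfies
`ν(G_{a*}) = 1/2`, `ν(G_{BaB*}) = 2 ν(G_{B*})²`, and consequently
`ν(G_{B*}) = (3 − √5)/4` and `ν(G_{b*}) = (√5 − 1)/4`. -/
theorem hitting_measure_shadow_values (ν : Measure (ℕ → Rad)) [IsProbabilityMeasure ν]
    (hred : ν {x | Reduced x} = 1)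
    (hstat : ν = (1 / 2 : ENNReal) • ν.map (act [Rad.a, Rad.b])
        + (1 / 2 : ENNReal) • ν.map (act [Rad.b, Rad.a])) :
    ν (Shadow [Rad.a]) = 1 / 2 ∧
    ν (Shadow [Rad.B, Rad.a, Rad.B]) = 2 * ν (Shadow [Rad.B]) ^ 2 ∧
    ν (Shadow [Rad.B]) = ENNReal.ofReal ((3 - Real.sqrt 5) / 4) ∧
    ν (Shadow [Rad.b]) = ENNReal.ofReal ((Real.sqrt 5 - 1) / 4) := by

  obtain ⟨hP, hQf, hQt, hQtt⟩ := m_values ν hred hstat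
  have ha : ν (Shadow [Rad.a]) = ν (SPm []) := by
    apply nu_congr ν hred
    intro x _
    rw [mem_shadow1]
    exact ⟨fun h => ⟨h, trivial⟩, fun h => h.1⟩
  have hb : ν (Shadow [Rad.b]) = ν (SQm [false]) := by
    apply nu_congr ν hred
    intro x hx
    rw [mem_shadow1]
    constructor
    · intro h
      exact ⟨by simpa [ltr] using h, red_succ hx (by simp [h]), trivial⟩
    · rintro ⟨h, -⟩; simpa [ltr] using h
  have hBB : ν (Shadow [Rad.B]) = ν (SQm [true]) := by
    apply nu_congr ν hred
    intro x hx
    rw [mem_shadow1]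
    constructor
    · intro h
      exact ⟨by simpa [ltr] using h, red_succ hx (by simp [h]), trivial⟩
    · rintro ⟨h, -⟩; simpa [ltr] using h
  have hBaB : ν (Shadow [Rad.B, Rad.a, Rad.B]) = ν (SQm [true, true]) := by
    apply nu_congr ν hred
    intro x hx
    rw [mem_shadow3]
    constructor
    · rintro ⟨h0, h1, h2⟩
      exact ⟨by simpa [ltr] using h0, h1, by simpa [ltr] using h2,
        red_succ hx (by simp [h2]), trivial⟩
    · rintro ⟨h0, h1, h2, -⟩
      exact ⟨by simpa [ltr] using h0, h1, by simpa [ltr] using h2⟩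
  have vB : ν (Shadow [Rad.B]) = ENNReal.ofReal xx := by
    rw [hBB]; exact ennval (measure_ne_top ν _) hQt
  have vb : ν (Shadow [Rad.b]) = ENNReal.ofReal yy := by
    rw [hb]; exact ennval (measure_ne_top ν _) hQf
  have vBaB : ν (Shadow [Rad.B, Rad.a, Rad.B]) = ENNReal.ofReal (2 * xx^2) := by
    rw [hBaB]; exact ennval (measure_ne_top ν _) hQtt
  refine ⟨?_, ?_, ?_, ?_⟩
  · rw [ha]
    apply (ENNReal.toReal_eq_toReal_iff' (measure_ne_top ν _) (by norm_num)).mp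
    rw [show ((1:ENNReal)/2).toReal = 1/2 by
      rw [ENNReal.toReal_div]; norm_num]
    exact hP
  · rw [vBaB, vB]
    rw [← ENNReal.ofReal_pow xx_pos.le]
    rw [show (2:ENNReal) = ENNReal.ofReal 2 by norm_num]
    rw [← ENNReal.ofReal_mul (by norm_num)]
  · rw [vB]; rfl
  · rw [vb]; rfl
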